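/- Let f₁(x,y) = (2 + 8xy - 24x³y + 16x⁵y + y² + 2x²y² - 34x⁴y² + 88x⁶y² - 87x⁸y² + 30x¹⁰y²)/2. Then f₁ = 0 is an invariant algebraic curve of the Abel equation dy/dx = p(x)y² + q(x)y³ with p(x) = 40x⁴ - 30x² + 2 and q(x) = 75x⁹ - 150x⁷ + 88x⁵ - 10x³ - 3x, i.e., f₁ divides ∂f₁/∂x + (p y² + q y³)·∂f₁/∂y in ℝ[x,y]. -/
import Mathlib

open MvPolynomial

noncomputable def x : MvPolynomial (Fin 2) ℝ := X 0
noncomputable def y : MvPolynomial (Fin 2) ℝ := X 1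

noncomputable def pP : MvPolynomial (Fin 2) ℝ := 40*x^4 - 30*x^2 + 2
noncomputable def qP : MvPolynomial (Fin 2) ℝ := 75*x^9 - 150*x^7 + 88*x^5 - 10*x^3 - 3*x

noncomputable def f₁ : MvPolynomial (Fin 2) ℝ :=
  C (1/2 : ℝ) * (2 + 8*x*y - 24*x^3*y + 16*x^5*y + y^2 + 2*x^2*y^2 - 34*x^4*y^2
    + 88*x^6*y^2 - 87*x^8*y^2 + 30*x^10*y^2)

lemma pderiv_num (i : Fin 2) (n : ℕ) [n.AtLeastTwo] :
    pderiv i (OfNat.ofNat n : MvPolynomial (Fin 2) ℝ) = 0 := by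
  rw [← map_ofNat (C : ℝ →+* MvPolynomial (Fin 2) ℝ), pderiv_C]

set_option maxHeartbeats 2000000 in
theorem f1_invariant :
    f₁ ∣ (pderiv 0 f₁ + (pP * y^2 + qP * y^3) * pderiv 1 f₁) := by
  refine ⟨4*y - 36*x^2*y + 40*x^4*y - 6*x*y^2 - 20*x^3*y^2 + 176*x^5*y^2
    - 300*x^7*y^2 + 150*x^9*y^2, ?_⟩
  have hx : pderiv (0 : Fin 2) x = 1 := by simp [x]
  have hy : pderiv (0 : Fin 2) y = 0 := by simp [y, pderiv_X]
  have hx1 : pderiv (1 : Fin 2) x = 0 := by simp [x, pderiv_X]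
  have hy1 : pderiv (1 : Fin 2) y = 1 := by simp [y]
  unfold f₁ pP qP
  simp only [← map_ofNat (C : ℝ →+* MvPolynomial (Fin 2) ℝ)]
  simp only [Derivation.leibniz, Derivation.leibniz_pow, map_add, map_sub,
    pderiv_C, hx, hy, hx1, hy1, smul_eq_mul, mul_zero, zero_mul,
    add_zero, zero_add, mul_one, one_mul]
  simp only [map_ofNat]
  ring
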